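/- Let A be a local supercommutative superalgebra over a field of characteristic ≠ 2, with maximal superideal M = m ⊕ A₁ (m the maximal ideal of A₀), A₀ Noetherian, and A₁ finitely generated over A₀. Suppose A is oddly regular, i.e., the superideal I_A = A·A₁ is generated by an odd regular sequence y₁,…,y_k (meaning Ann_A(y₁⋯y_k) = Ay₁+⋯+Ay_k). Then the odd Krull dimension Ksdim₁(A) equals dim over the residue field k(A)=A₀/m of the vector space A₁/mA₁. -/

import Mathlib

/-- A supercommutative superalgebra structure on a `k`-algebra `A`:
`A = ev ⊕ od` is `ℤ/2`-graded and homogeneous elements satisfy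
`a * b = (-1)^{|a||b|} * (b * a)`. -/
structure SuperAlg (k A : Type) [Field k] [Ring A] [Algebra k A] where
  ev : Submodule k A
  od : Submodule k A
  sup_eq_top : ev ⊔ od = ⊤
  inf_eq_bot : ev ⊓ od = ⊥
  one_mem : (1 : A) ∈ ev
  mul_ee : ∀ a ∈ ev, ∀ b ∈ ev, a * b ∈ ev
  mul_eo : ∀ a ∈ ev, ∀ b ∈ od, a * b ∈ od
  mul_oe : ∀ a ∈ od, ∀ b ∈ ev, a * b ∈ od
  mul_oo : ∀ a ∈ od, ∀ b ∈ od, a * b ∈ ev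
  comm_ee : ∀ a ∈ ev, ∀ b ∈ ev, a * b = b * a
  comm_eo : ∀ a ∈ ev, ∀ b ∈ od, a * b = b * a
  comm_oe : ∀ a ∈ od, ∀ b ∈ ev, a * b = b * a
  comm_oo : ∀ a ∈ od, ∀ b ∈ od, a * b = -(b * a)

variable {k A : Type} [Field k] [Ring A] [Algebra k A]

/-- The even part `A₀` of a superalgebra, as a subalgebra of `A`. -/
def SuperAlg.evSub (S : SuperAlg k A) : Subalgebra k A where
  carrier := S.ev
  mul_mem' := fun {a b} ha hb => S.mul_ee a ha b hb
  add_mem' := fun {a b} ha hb => S.ev.add_mem ha hb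
  one_mem' := S.one_mem
  zero_mem' := S.ev.zero_mem
  algebraMap_mem' := fun r => by
    rw [Algebra.algebraMap_eq_smul_one]; exact S.ev.smul_mem r S.one_mem

/-- The even part of a supercommutative superalgebra is a commutative ring. -/
noncomputable instance SuperAlg.instCommRingEv (S : SuperAlg k A) : CommRing S.evSub :=
  { (inferInstance : Ring S.evSub) with
    mul_comm := fun a b => Subtype.ext (S.comm_ee a.1 a.2 b.1 b.2) }

/-- The annihilator in the even part `A₀` of an element `p` of `A`. -/
def SuperAlg.annEv (S : SuperAlg k A) (p : A) : Ideal S.evSub where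
  carrier := {a : S.evSub | (a : A) * p = 0}
  add_mem' := by
    intro a b ha hb
    show ((a + b : S.evSub) : A) * p = 0
    push_cast
    rw [add_mul, ha, hb, add_zero]
  zero_mem' := by
    show ((0 : S.evSub) : A) * p = 0
    push_cast
    rw [zero_mul]
  smul_mem' := by
    intro c x hx
    show ((c * x : S.evSub) : A) * p = 0
    push_cast
    rw [mul_assoc, hx, mul_zero]

/-- `y₁, …, y_t` is a system of odd parameters of `S`. -/
def SuperAlg.IsOddParams (S : SuperAlg k A) {t : ℕ} (y : Fin t → A) : Prop :=
  (∀ i, y i ∈ S.od) ∧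
  ringKrullDim (S.evSub ⧸ S.annEv (List.ofFn y).prod) = ringKrullDim S.evSub

/-- The odd Krull dimension `Ksdim₁` of `S`. -/
noncomputable def SuperAlg.ksdim1 (S : SuperAlg k A) : ℕ :=
  sSup {t : ℕ | ∃ y : Fin t → A, S.IsOddParams y}

/-- The submodule `m·A₁` of `A`, for an ideal `m` of the even part. -/
def SuperAlg.smulOdd (S : SuperAlg k A) (m : Ideal S.evSub) : Submodule k A :=
  Submodule.span k {x : A | ∃ a ∈ m, ∃ b ∈ S.od, x = (a : A) * b}

namespace SuperAlg

variable (S : SuperAlg k A)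

lemma odd_sq (hchar : (2 : k) ≠ 0) {b : A} (hb : b ∈ S.od) : b * b = 0 := by
  have h : b * b + b * b = 0 := add_eq_zero_iff_eq_neg.mpr (S.comm_oo b hb b hb)
  have h2 : (2 : k) • (b * b) = 0 := by rw [two_smul]; exact h
  calc b * b = ((2 : k)⁻¹ * 2) • (b * b) := by rw [inv_mul_cancel₀ hchar, one_smul]
    _ = (2 : k)⁻¹ • ((2 : k) • (b * b)) := mul_smul _ _ _
    _ = 0 := by rw [h2, smul_zero]

lemma mem_sup' (x : A) : ∃ p ∈ S.ev, ∃ q ∈ S.od, p + q = x := by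
  have hx : x ∈ S.ev ⊔ S.od := by rw [S.sup_eq_top]; exact Submodule.mem_top
  exact Submodule.mem_sup.mp hx

lemma even_central {e : A} (he : e ∈ S.ev) (x : A) : e * x = x * e := by
  obtain ⟨p, hp, q, hq, rfl⟩ := S.mem_sup' x
  rw [mul_add, add_mul, S.comm_ee e he p hp, S.comm_eo e he q hq]

lemma sandwich (hchar : (2 : k) ≠ 0) {b : A} (hb : b ∈ S.od) (x : A) : b * x * b = 0 := by
  obtain ⟨p, hp, q, hq, rfl⟩ := S.mem_sup' x
  have hbb := S.odd_sq hchar hb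
  have h1 : b * p * b = 0 := by
    rw [← S.comm_eo p hp b hb, mul_assoc, hbb, mul_zero]
  have h2 : b * q * b = 0 := by
    rw [S.comm_oo b hb q hq, neg_mul, mul_assoc, hbb, mul_zero, neg_zero]
  rw [mul_add, add_mul, h1, h2, add_zero]

lemma prod_mem_mul (hchar : (2 : k) ≠ 0) {b : A} (hb : b ∈ S.od) {L : List A}
    (hbL : b ∈ L) : L.prod * b = 0 := by
  obtain ⟨P, Q, rfl⟩ := List.append_of_mem hbL
  rw [List.prod_append, List.prod_cons, mul_assoc]
  rw [S.sandwich hchar hb Q.prod, mul_zero]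

lemma prod_mul_odd {L : List A} (hL : ∀ a ∈ L, a ∈ S.od) {b : A} (hb : b ∈ S.od) :
    L.prod * b = ((-1 : ℤ) ^ L.length) • (b * L.prod) := by
  induction L with
  | nil => simp
  | cons a L ih =>
    have ha := hL a List.mem_cons_self
    have hL' : ∀ x ∈ L, x ∈ S.od := fun x hx => hL x (List.mem_cons_of_mem a hx)
    rw [List.prod_cons, List.length_cons, mul_assoc, ih hL', mul_smul_comm,
      ← mul_assoc, S.comm_oo a ha b hb, pow_succ]
    rw [neg_mul, mul_assoc, smul_neg, mul_neg_one, neg_smul]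

lemma odd_decomp {t : ℕ} {y : Fin t → A} (hy : ∀ i, y i ∈ S.od)
    (hIA : Ideal.span (Set.range y) = Ideal.span (S.od : Set A))
    {b : A} (hb : b ∈ S.od) : ∃ e : Fin t → S.evSub, b = ∑ i, (e i : A) * y i := by
  have hb' : b ∈ Ideal.span (Set.range y) := hIA ▸ Ideal.subset_span hb
  rw [← Ideal.submodule_span_eq] at hb'
  obtain ⟨c, hc⟩ := (Submodule.mem_span_range_iff_exists_fun A).mp hb'
  simp only [smul_eq_mul] at hc
  choose p hp q hq hpq using fun i => S.mem_sup' (c i)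
  refine ⟨fun i => ⟨p i, hp i⟩, ?_⟩
  have key : b - ∑ i, p i * y i = ∑ i, q i * y i := by
    rw [← hc, ← Finset.sum_sub_distrib]
    congr 1; funext i
    rw [← hpq i, add_mul, add_sub_cancel_left]
  have h1 : b - ∑ i, p i * y i ∈ S.od :=
    Submodule.sub_mem _ hb (Submodule.sum_mem _ fun i _ => S.mul_eo _ (hp i) _ (hy i))
  have h2 : b - ∑ i, p i * y i ∈ S.ev :=
    key ▸ Submodule.sum_mem _ fun i _ => S.mul_oo _ (hq i) _ (hy i)
  have h0 : b - ∑ i, p i * y i ∈ S.ev ⊓ S.od := ⟨h2, h1⟩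
  rw [S.inf_eq_bot, Submodule.mem_bot] at h0
  have := sub_eq_zero.mp h0
  simpa using this

lemma nil_of_even_mem_span (hchar : (2 : k) ≠ 0) {t : ℕ} {y : Fin t → A}
    (hy : ∀ i, y i ∈ S.od) (a : S.evSub)
    (ha : (a : A) ∈ Ideal.span (Set.range y)) : IsNilpotent a := by
  rw [← Ideal.submodule_span_eq] at ha
  obtain ⟨c, hc⟩ := (Submodule.mem_span_range_iff_exists_fun A).mp ha
  simp only [smul_eq_mul] at hc
  choose p hp q hq hpq using fun i => S.mem_sup' (c i)
  have key : (a : A) - ∑ i, q i * y i = ∑ i, p i * y i := by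
    rw [← hc, ← Finset.sum_sub_distrib]
    congr 1; funext i
    rw [← hpq i, add_mul, add_sub_cancel_right]
  have h1 : (a : A) - ∑ i, q i * y i ∈ S.ev :=
    Submodule.sub_mem _ a.2 (Submodule.sum_mem _ fun i _ => S.mul_oo _ (hq i) _ (hy i))
  have h2 : (a : A) - ∑ i, q i * y i ∈ S.od :=
    key ▸ Submodule.sum_mem _ fun i _ => S.mul_eo _ (hp i) _ (hy i)
  have h0 : (a : A) - ∑ i, q i * y i ∈ S.ev ⊓ S.od := ⟨h1, h2⟩
  rw [S.inf_eq_bot, Submodule.mem_bot] at h0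
  have ha' : (a : A) = ∑ i, q i * y i := sub_eq_zero.mp h0
  set W : Fin t → S.evSub := fun i => ⟨q i * y i, S.mul_oo _ (hq i) _ (hy i)⟩ with hW
  have haW : a = ∑ i, W i := by
    apply Subtype.ext
    rw [ha']
    simp [hW]
  rw [haW]
  apply isNilpotent_sum
  intro i _
  refine ⟨2, ?_⟩
  apply Subtype.ext
  show ((W i) ^ 2 : S.evSub).1 = (0 : A)
  rw [SubmonoidClass.coe_pow, sq]
  show (q i * y i) * (q i * y i) = 0
  rw [mul_assoc, ← mul_assoc (y i) (q i) (y i), S.comm_oo _ (hy i) _ (hq i),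
    neg_mul, mul_assoc, S.odd_sq hchar (hy i), mul_zero, mul_neg, mul_zero, neg_zero]

/-- Span of products of `m` distinct `y`'s with even coefficients. -/
def Wp {t : ℕ} (y : Fin t → A) (m : ℕ) : Submodule k A :=
  Submodule.span k
    {x : A | ∃ c ∈ S.ev, ∃ l : List (Fin t), l.length = m ∧ l.Nodup ∧ x = c * (l.map y).prod}

lemma mul_Wp (hchar : (2 : k) ≠ 0) {t : ℕ} {y : Fin t → A} (hy : ∀ i, y i ∈ S.od) {m : ℕ}
    {u v : A} (hu : u ∈ S.Wp y m)
    (hv : v ∈ Submodule.span k {x : A | ∃ c ∈ S.ev, ∃ i : Fin t, x = c * y i}) :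
    u * v ∈ S.Wp y (m + 1) := by
  induction hu using Submodule.span_induction with
  | zero => rw [zero_mul]; exact Submodule.zero_mem _
  | add x₁ x₂ h₁ h₂ ih₁ ih₂ => rw [add_mul]; exact Submodule.add_mem _ ih₁ ih₂
  | smul a x hx ih => rw [smul_mul_assoc]; exact Submodule.smul_mem _ a ih
  | mem u hu =>
    obtain ⟨c, hc, l, hlen, hnodup, rfl⟩ := hu
    induction hv using Submodule.span_induction with
    | zero => rw [mul_zero]; exact Submodule.zero_mem _
    | add x₁ x₂ h₁ h₂ ih₁ ih₂ => rw [mul_add]; exact Submodule.add_mem _ ih₁ ih₂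
    | smul a x hx ih => rw [mul_smul_comm]; exact Submodule.smul_mem _ a ih
    | mem v hv =>
      obtain ⟨c', hc', i, rfl⟩ := hv
      have hcomm : (c * (l.map y).prod) * (c' * y i)
          = (c * c') * ((l.map y).prod * y i) := by
        rw [mul_assoc, ← mul_assoc _ c' (y i), ← S.even_central hc' ((l.map y).prod),
          mul_assoc c' _ (y i), ← mul_assoc c c' _]
      by_cases hil : i ∈ l
      · have hyi : y i ∈ l.map y := List.mem_map_of_mem hil
        rw [hcomm, S.prod_mem_mul hchar (hy i) hyi, mul_zero]
        exact Submodule.zero_mem _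
      · have hp : (l.map y).prod * y i = ((l ++ [i]).map y).prod := by
          rw [List.map_append, List.prod_append]
          simp
        rw [hcomm, hp]
        apply Submodule.subset_span
        refine ⟨c * c', S.mul_ee c hc c' hc', l ++ [i], ?_, ?_, rfl⟩
        · simp [hlen]
        · simp [List.nodup_append, hnodup, hil]
          rintro a ha rfl
          exact hil ha

lemma prod_mem_Wp (hchar : (2 : k) ≠ 0) {t : ℕ} {y : Fin t → A} (hy : ∀ i, y i ∈ S.od)
    (L : List A)
    (hL : ∀ a ∈ L, a ∈ Submodule.span k {x : A | ∃ c ∈ S.ev, ∃ i : Fin t, x = c * y i}) :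
    L.prod ∈ S.Wp y L.length := by
  induction L using List.reverseRecOn with
  | nil =>
    apply Submodule.subset_span
    exact ⟨1, S.one_mem, [], rfl, List.nodup_nil, by simp⟩
  | append_singleton L a ih =>
    rw [List.prod_append, List.prod_singleton, List.length_append, List.length_singleton]
    exact S.mul_Wp hchar hy (ih fun x hx => hL x (List.mem_append_left _ hx))
      (hL a (List.mem_append_right _ (List.mem_singleton_self a)))

lemma Wp_eq_bot {t : ℕ} (y : Fin t → A) {m : ℕ} (hm : t < m) : S.Wp y m = ⊥ := by
  unfold Wp
  convert Submodule.span_empty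
  rw [Set.eq_empty_iff_forall_notMem]
  rintro x ⟨c, hc, l, hlen, hnodup, rfl⟩
  have := hnodup.length_le_card
  rw [hlen, Fintype.card_fin] at this
  omega

end SuperAlg

lemma ringKrullDim_quotient_eq_of_le_nilradical {R : Type} [CommRing R] {I : Ideal R}
    (h : I ≤ nilradical R) : ringKrullDim (R ⧸ I) = ringKrullDim R := by
  refine le_antisymm (ringKrullDim_quotient_le I) ?_
  have hker : ∀ (p : Ideal R), p.IsPrime → RingHom.ker (Ideal.Quotient.mk I) ≤ p := by
    intro p hp
    rw [Ideal.mk_ker]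
    exact h.trans (nilradical_le_prime p)
  let f : PrimeSpectrum R → PrimeSpectrum (R ⧸ I) := fun p =>
    ⟨p.asIdeal.map (Ideal.Quotient.mk I),
      Ideal.map_isPrime_of_surjective Ideal.Quotient.mk_surjective (hker _ p.2)⟩
  apply Order.krullDim_le_of_strictMono f
  have hcm : ∀ r : PrimeSpectrum R,
      Ideal.comap (Ideal.Quotient.mk I) (f r).asIdeal = r.asIdeal := by
    intro r
    show Ideal.comap _ (Ideal.map _ _) = _
    rw [Ideal.comap_map_of_surjective _ Ideal.Quotient.mk_surjective, ← RingHom.ker_eq_comap_bot,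
      Ideal.mk_ker]
    exact sup_eq_left.mpr (h.trans (nilradical_le_prime r.asIdeal))
  intro p q hpq
  have hle : f p ≤ f q := Ideal.map_mono hpq.le
  refine lt_of_le_of_ne hle fun he => hpq.ne ?_
  have : p.asIdeal = q.asIdeal := by
    rw [← hcm p, ← hcm q, he]
  exact PrimeSpectrum.ext this

/-- for a local Noetherian supercommutative superalgebra `A` with maximal
superideal `m ⊕ A₁` which is oddly regular (the superideal `I_A = A·A₁` is generated by
an odd regular sequence), the odd Krull dimension `Ksdim₁ A` equals
`dim_{k(A)} (A₁ / m·A₁)`; this dimension is expressed by the existence of `Ksdim₁ A`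
odd elements whose classes form a basis of the `k(A) = A₀/m`-vector space `A₁/m·A₁`. -/
theorem ksdim1_eq_residue_dim_of_oddly_regular (hchar : (2 : k) ≠ 0) (S : SuperAlg k A)
    (hnoeth : IsNoetherianRing S.evSub)
    (mA : Ideal S.evSub) (hmax : mA.IsMaximal)
    (hlocal : ∀ m' : Ideal S.evSub, m'.IsMaximal → m' = mA)
    (mg : ℕ) (yg : Fin mg → A) (hyg : ∀ i, yg i ∈ S.od)
    (hgen : ∀ b ∈ S.od,
      b ∈ Submodule.span k {x : A | ∃ c ∈ S.ev, ∃ i : Fin mg, x = c * yg i})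
    -- `A` is oddly regular: `I_A` is generated by an odd regular sequence `y`:
    (t : ℕ) (y : Fin t → A) (hy : ∀ i, y i ∈ S.od)
    (hreg : ∀ x : A, x * (List.ofFn y).prod = 0 ↔ x ∈ Ideal.span (Set.range y))
    (hIA : Ideal.span (Set.range y) = Ideal.span (S.od : Set A)) :
    ∃ v : Fin S.ksdim1 → A, (∀ i, v i ∈ S.od) ∧
      -- the classes of the `v i` span `A₁ / m·A₁` over `A₀/m`:
      (∀ w ∈ S.od, ∃ c : Fin S.ksdim1 → S.evSub,
        w - ∑ i, (c i : A) * v i ∈ S.smulOdd mA) ∧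
      -- and they are linearly independent over `A₀/m`:
      (∀ c : Fin S.ksdim1 → S.evSub,
        (∑ i, (c i : A) * v i) ∈ S.smulOdd mA → ∀ i, c i ∈ mA) := by
  haveI : Nontrivial S.evSub := by
    by_contra hns
    rw [not_nontrivial_iff_subsingleton] at hns
    exact hmax.ne_top (Subsingleton.elim _ _)
  -- the set whose sSup is ksdim1
  set ps : Set ℕ := {s : ℕ | ∃ z : Fin s → A, S.IsOddParams z} with hps
  -- membership of t
  have htmem : t ∈ ps := by
    refine ⟨y, hy, ?_⟩
    apply ringKrullDim_quotient_eq_of_le_nilradical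
    intro a ha
    have ha' : (a : A) * (List.ofFn y).prod = 0 := ha
    exact mem_nilradical.mpr (S.nil_of_even_mem_span hchar hy a ((hreg _).mp ha'))
  -- boundedness
  have hbound : ∀ s ∈ ps, s ≤ t := by
    rintro s ⟨z, hzodd, hzdim⟩
    by_contra hst
    push_neg at hst
    -- product of the z's vanishes
    have hmemV : ∀ a ∈ List.ofFn z,
        a ∈ Submodule.span k {x : A | ∃ c ∈ S.ev, ∃ i : Fin t, x = c * y i} := by
      intro a ha
      obtain ⟨i, rfl⟩ := List.mem_ofFn.mp ha
      obtain ⟨e, he⟩ := S.odd_decomp hy hIA (hzodd i)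
      rw [he]
      exact Submodule.sum_mem _ fun i' _ =>
        Submodule.subset_span ⟨e i', (e i').2, i', rfl⟩
    have hprod : (List.ofFn z).prod = 0 := by
      have h1 := S.prod_mem_Wp hchar hy (List.ofFn z) hmemV
      rw [List.length_ofFn, S.Wp_eq_bot y hst, Submodule.mem_bot] at h1
      exact h1
    have hann : S.annEv (List.ofFn z).prod = ⊤ := by
      rw [Ideal.eq_top_iff_one]
      show ((1 : S.evSub) : A) * (List.ofFn z).prod = 0
      rw [hprod, mul_zero]
    rw [hann] at hzdim
    haveI : Subsingleton (S.evSub ⧸ (⊤ : Ideal S.evSub)) :=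
      Ideal.Quotient.subsingleton_iff.mpr rfl
    rw [ringKrullDim_eq_bot_of_subsingleton] at hzdim
    have h0 := ringKrullDim_nonneg_of_nontrivial (R := S.evSub)
    rw [← hzdim] at h0
    exact absurd (le_bot_iff.mp h0) (by simp)
  have hks : S.ksdim1 = t := by
    refine le_antisymm (csSup_le ⟨t, htmem⟩ hbound) (le_csSup ⟨t, fun s hs => hbound s hs⟩ htmem)
  rw [hks]
  refine ⟨y, hy, ?_, ?_⟩
  · -- spanning
    intro w hw
    obtain ⟨e, he⟩ := S.odd_decomp hy hIA hw
    exact ⟨e, by rw [he, sub_self]; exact Submodule.zero_mem _⟩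
  · -- linear independence
    intro c hcm j
    haveI := hmax.isPrime
    set L : List A := List.ofFn y with hL
    have hLlen : L.length = t := List.length_ofFn
    have hjL : (j : ℕ) < L.length := by rw [hLlen]; exact j.2
    set T1 : A := (L.take j).prod with hT1
    set T2 : A := (L.drop ((j : ℕ) + 1)).prod with hT2
    set x : A := T1 * T2 with hx
    have hdropj : L.drop (j : ℕ) = y j :: L.drop ((j : ℕ) + 1) := by
      rw [List.drop_eq_getElem_cons hjL]
      congr 1
      simp [hL]
    have hprodsplit : L.prod = T1 * (y j * T2) := by
      rw [← List.prod_take_mul_prod_drop L (j : ℕ), hdropj, List.prod_cons]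
    have hodd_mem : ∀ a ∈ L, a ∈ S.od := by
      intro a ha
      obtain ⟨i, rfl⟩ := List.mem_ofFn.mp ha
      exact hy i
    have hodd_drop : ∀ a ∈ L.drop ((j : ℕ) + 1), a ∈ S.od :=
      fun a ha => hodd_mem a (List.mem_of_mem_drop ha)
    set n2 : ℕ := (L.drop ((j : ℕ) + 1)).length with hn2
    set ε : ℤ := (-1) ^ n2 with hε
    have hxyj : x * y j = ε • L.prod := by
      rw [hprodsplit, hx, mul_assoc, S.prod_mul_odd hodd_drop (hy j), mul_smul_comm]
    have hxyi : ∀ i : Fin t, i ≠ j → x * y i = 0 := by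
      intro i hij
      have hij' : (i : ℕ) ≠ (j : ℕ) := fun h => hij (Fin.ext h)
      rcases lt_or_gt_of_ne hij' with hlt | hgt
      · have hi1 : (i : ℕ) < (L.take (j : ℕ)).length := by
          rw [List.length_take, hLlen]
          omega
        have hmem : y i ∈ L.take (j : ℕ) := by
          have h2 : (L.take (j : ℕ))[(i : ℕ)]'hi1 = y i := by
            simp [hL, List.getElem_take]
          exact h2 ▸ List.getElem_mem hi1
        have h1 : T1 * y i = 0 := S.prod_mem_mul hchar (hy i) hmem
        calc x * y i = T1 * (T2 * y i) := by rw [hx, mul_assoc]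
          _ = T1 * (((-1 : ℤ) ^ n2) • (y i * T2)) := by
              rw [S.prod_mul_odd hodd_drop (hy i), hn2]
          _ = ((-1 : ℤ) ^ n2) • (T1 * (y i * T2)) := mul_smul_comm _ _ _
          _ = ((-1 : ℤ) ^ n2) • ((T1 * y i) * T2) := by rw [mul_assoc]
          _ = 0 := by rw [h1, zero_mul, smul_zero]
      · have hi1 : (i : ℕ) - ((j : ℕ) + 1) < (L.drop ((j : ℕ) + 1)).length := by
          rw [List.length_drop, hLlen]
          omega
        have hmem : y i ∈ L.drop ((j : ℕ) + 1) := by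
          have h2 : (L.drop ((j : ℕ) + 1))[(i : ℕ) - ((j : ℕ) + 1)]'hi1 = y i := by
            simp only [hL, List.getElem_drop, List.getElem_ofFn]
            congr 1
            exact Fin.ext (by simp; omega)
          exact h2 ▸ List.getElem_mem hi1
        have h2 : T2 * y i = 0 := S.prod_mem_mul hchar (hy i) hmem
        calc x * y i = T1 * (T2 * y i) := by rw [hx, mul_assoc]
          _ = 0 := by rw [h2, mul_zero]
    -- key computation
    have key : ∀ d : Fin t → S.evSub,
        x * (∑ i, (d i : A) * y i) = ε • ((d j : A) * L.prod) := by
      intro d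
      rw [Finset.mul_sum]
      rw [Finset.sum_eq_single j]
      · calc x * ((d j : A) * y j) = (x * (d j : A)) * y j := (mul_assoc _ _ _).symm
          _ = ((d j : A) * x) * y j := by rw [← S.even_central (d j).2 x]
          _ = (d j : A) * (x * y j) := mul_assoc _ _ _
          _ = (d j : A) * (ε • L.prod) := by rw [hxyj]
          _ = ε • ((d j : A) * L.prod) := mul_smul_comm _ _ _
      · intro i _ hij
        calc x * ((d i : A) * y i) = (x * (d i : A)) * y i := (mul_assoc _ _ _).symm
          _ = ((d i : A) * x) * y i := by rw [← S.even_central (d i).2 x]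
          _ = (d i : A) * (x * y i) := mul_assoc _ _ _
          _ = 0 := by rw [hxyi i hij, mul_zero]
      · intro h
        exact absurd (Finset.mem_univ j) h
    -- the target submodule
    let N : Submodule k A :=
      { carrier := {z : A | ∃ μ ∈ mA, z = (μ : A) * L.prod}
        zero_mem' := ⟨0, mA.zero_mem, by simp⟩
        add_mem' := by
          rintro z1 z2 ⟨μ1, h1, rfl⟩ ⟨μ2, h2, rfl⟩
          exact ⟨μ1 + μ2, mA.add_mem h1 h2, by push_cast; rw [add_mul]⟩
        smul_mem' := by
          rintro a z ⟨μ, hμ, rfl⟩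
          exact ⟨a • μ, mA.smul_of_tower_mem a hμ,
            by rw [SetLike.val_smul, smul_mul_assoc]⟩ }
    have hxN : x * (∑ i, (c i : A) * y i) ∈ N := by
      have hle : S.smulOdd mA ≤ N.comap (LinearMap.mulLeft k x) := by
        rw [SuperAlg.smulOdd, Submodule.span_le]
        rintro _ ⟨a, ha, b, hb, rfl⟩
        simp only [Submodule.mem_comap, LinearMap.mulLeft_apply, SetLike.mem_coe]
        obtain ⟨e, he⟩ := S.odd_decomp hy hIA hb
        have hxb : x * ((a : A) * b) = ε • (((a : A) * (e j : A)) * L.prod) := by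
          calc x * ((a : A) * b) = (x * (a : A)) * b := (mul_assoc _ _ _).symm
            _ = ((a : A) * x) * b := by rw [← S.even_central a.2 x]
            _ = (a : A) * (x * b) := mul_assoc _ _ _
            _ = (a : A) * (ε • ((e j : A) * L.prod)) := by rw [he, key]
            _ = ε • ((a : A) * ((e j : A) * L.prod)) := mul_smul_comm _ _ _
            _ = ε • (((a : A) * (e j : A)) * L.prod) := by rw [mul_assoc]
        rw [hxb]
        refine ⟨(ε : S.evSub) * (a * e j), mA.mul_mem_left _ (mA.mul_mem_right (e j) ha), ?_⟩
        push_cast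
        rw [zsmul_eq_mul]
        simp [mul_assoc]
      exact hle hcm
    rw [key c] at hxN
    obtain ⟨μ, hμ, he⟩ := hxN
    have hεε : ε * ε = 1 := by
      rw [hε, ← pow_add]
      exact Even.neg_one_pow ⟨n2, rfl⟩
    have hkey : (c j : A) * L.prod = (((ε : S.evSub) * μ : S.evSub) : A) * L.prod := by
      have h2 := congrArg (fun z => ε • z) he
      simp only [smul_smul, hεε, one_smul] at h2
      rw [h2, zsmul_eq_mul, ← mul_assoc]
      push_cast
      rfl
    have hann : ((c j - (ε : S.evSub) * μ : S.evSub) : A) * L.prod = 0 := by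
      push_cast at hkey ⊢
      rw [sub_mul, ← hkey, sub_self]
    have hnil : IsNilpotent (c j - (ε : S.evSub) * μ) :=
      S.nil_of_even_mem_span hchar hy _ ((hreg _).mp hann)
    have hmem : c j - (ε : S.evSub) * μ ∈ mA := nilradical_le_prime mA (mem_nilradical.mpr hnil)
    have hcj : c j = (c j - (ε : S.evSub) * μ) + (ε : S.evSub) * μ := by ring
    rw [hcj]
    exact mA.add_mem hmem (mA.mul_mem_left _ hμ)
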